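/- arXiv:cs/0701008 — 8 statements merged into one kernel-verified Lean document; each statement's English description precedes it below -/
import Mathlib

section
/- Let n m : ℕ and let φ : (Fin n → Bool) → (Fin m → Bool) → Bool be any Boolean predicate. Define μ : (Fin n → Bool) → (Fin m → Bool) → Bool → Bool by μ x y z = true iff (φ x y = true or z = true) and (z = true → y j = true for every j : Fin m). Then (∃ x : Fin n → Bool, ∀ y : Fin m → Bool, φ x y = false) if and only if (∃ x : Fin n → Bool, ∃! p : (Fin m → Bool) × Bool, μ x p.1 p.2 = true). (Moreover, the unique such pair is necessarily (fun _ => true, true).) -/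
/-- Semantic correctness of the reduction of Theorem 2.1
(∃¬∃-3SAT to ∃∃!*-4SAT): `μ x y z` holds iff `(φ x y ∨ z) ∧ (z → ⋀ⱼ yⱼ)`. -/
theorem stmt_0 (n m : ℕ) (φ : (Fin n → Bool) → (Fin m → Bool) → Bool)
    (μ : (Fin n → Bool) → (Fin m → Bool) → Bool → Bool)
    (hμ : ∀ (x : Fin n → Bool) (y : Fin m → Bool) (z : Bool),
      μ x y z = true ↔
        ((φ x y = true ∨ z = true) ∧ (z = true → ∀ j : Fin m, y j = true))) :
    ((∃ x : Fin n → Bool, ∀ y : Fin m → Bool, φ x y = false) ↔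
      (∃ x : Fin n → Bool, ∃! p : (Fin m → Bool) × Bool, μ x p.1 p.2 = true)) ∧
    (∀ x : Fin n → Bool, (∃! p : (Fin m → Bool) × Bool, μ x p.1 p.2 = true) →
      ∀ p : (Fin m → Bool) × Bool, μ x p.1 p.2 = true →
        p = (fun _ => true, true)) := by
  have htop : ∀ x, μ x (fun _ => true) true = true := by
    intro x; rw [hμ]; simp
  constructor
  · constructor
    · rintro ⟨x, hx⟩
      refine ⟨x, (fun _ => true, true), htop x, ?_⟩
      rintro ⟨y, z⟩ hp
      rw [hμ] at hp
      have hz : z = true := by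
        rcases hp.1 with h | h
        · rw [hx y] at h; exact absurd h (by simp)
        · exact h
      have hy := hp.2 hz
      simp only [Prod.mk.injEq]
      exact ⟨funext fun j => hy j, hz⟩
    · rintro ⟨x, hu⟩
      refine ⟨x, fun y => ?_⟩
      by_contra h
      have hy : φ x y = true := by
        cases hφ : φ x y
        · exact absurd hφ h
        · rfl
      have h1 : μ x y false = true := by
        rw [hμ]; exact ⟨Or.inl hy, by simp⟩
      obtain ⟨p, hp, hun⟩ := hu
      have e1 := hun (y, false) h1
      have e2 := hun ((fun _ => true), true) (htop x)
      simpa using congrArg Prod.snd (e1.trans e2.symm)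
  · intro x hu p hp
    obtain ⟨q, hq, hun⟩ := hu
    rw [hun p hp, hun (fun _ => true, true) (htop x)]
end

section
/- Define C' : Bool → Bool → Bool → Bool → Bool → Bool by C' a₁ a₂ a₃ z v = (a₁ || a₂ || v) && (a₃ || z || !v) && (!a₁ || !z || v) && (!a₂ || !z || v) && (!a₁ || !a₃ || v) && (!a₂ || !a₃ || v). For all a₁ a₂ a₃ z : Bool, if (a₁ || a₂ || a₃ || z) = true, then there exists a unique v : Bool with C' a₁ a₂ a₃ z v = true. -/
/-- The six-clause gadget replacing the 4-clause `a₁ ∨ a₂ ∨ a₃ ∨ z`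
in the reduction from ∃∃!*-4SAT to ∃∃!*-3SAT (Theorem 2.3). -/
def C' (a₁ a₂ a₃ z v : Bool) : Bool :=
  (a₁ || a₂ || v) && (a₃ || z || !v) && (!a₁ || !z || v) && (!a₂ || !z || v) &&
    (!a₁ || !a₃ || v) && (!a₂ || !a₃ || v)

/-- Claim (b): every truth assignment to `a₁, a₂, a₃, z` making at least one of
them true extends uniquely to a proper assignment of the gadget. -/
theorem stmt_1 (a₁ a₂ a₃ z : Bool) (h : (a₁ || a₂ || a₃ || z) = true) :
    ∃! v : Bool, C' a₁ a₂ a₃ z v = true := by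
  cases a₁ <;> cases a₂ <;> cases a₃ <;> cases z <;>
    first
      | exact ⟨true, by decide, by decide⟩
      | exact ⟨false, by decide, by decide⟩
      | exact absurd h (by decide)
end

section
/- Let n m : ℕ and let φ be a 3CNF over the variable set X = Fin n ⊕ Fin m, given as a list of N clauses, each clause an ordered triple of literals. For x : Fin n → Bool, y : Fin m → Bool, v : Fin N → Bool and z : Bool, define evalμ' x y v z = true iff: for every clause index i : Fin N, C' a₁ a₂ a₃ z (v i) = true, where a₁, a₂, a₃ are the truth values of the three literals of the i-th clause under the assignment Sum.elim x y, and moreover z = true → y j = true for every j : Fin m. Then (∃ x : Fin n → Bool, ∀ y : Fin m → Bool, some clause of φ is false under Sum.elim x y) if and only if (∃ x : Fin n → Bool, ∃! q : (Fin m → Bool) × (Fin N → Bool) × Bool, evalμ' x q.1 q.2.1 q.2.2 = true). -/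
/-- A literal over the variable set `X`: a variable together with the sign
it must take. -/
abbrev Lit (X : Type*) := X × Bool

/-- A 3-clause over `X`: an ordered triple of literals. -/
abbrev Clause3 (X : Type*) := Lit X × Lit X × Lit X

/-- A literal `(p, s)` is true under `σ` iff `σ p = s`. -/
def litEval {X : Type*} (σ : X → Bool) (l : Lit X) : Bool := σ l.1 == l.2

/-- A clause is true under `σ` iff at least one of its three literals is true. -/
def clauseEval {X : Type*} (σ : X → Bool) (c : Clause3 X) : Bool :=
  litEval σ c.1 || litEval σ c.2.1 || litEval σ c.2.2

lemma C'_iff : ∀ a₁ a₂ a₃ z v : Bool,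
    (C' a₁ a₂ a₃ z v = true ↔ (v = (a₃ || z) ∧ (a₁ || a₂ || a₃ || z) = true)) := by
  decide

/-- Correctness of the composed reduction underlying Theorem 2.3:
`∃x ¬∃y φ(x,y)` holds iff some choice of `x` extends to a unique proper
assignment of the 3CNF `μ'` obtained by replacing each clause `(Cᵢ ∨ z)`
by the gadget `C'` with a fresh variable `vᵢ` and keeping the clauses
`(¬z ∨ yⱼ)`. -/
theorem stmt_3 (n m : ℕ) (φ : List (Clause3 (Fin n ⊕ Fin m))) :
    (∃ x : Fin n → Bool, ∀ y : Fin m → Bool,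
        ∃ i : Fin φ.length, clauseEval (Sum.elim x y) (φ.get i) = false) ↔
    (∃ x : Fin n → Bool,
      ∃! q : (Fin m → Bool) × (Fin φ.length → Bool) × Bool,
        (∀ i : Fin φ.length,
            C' (litEval (Sum.elim x q.1) (φ.get i).1)
              (litEval (Sum.elim x q.1) (φ.get i).2.1)
              (litEval (Sum.elim x q.1) (φ.get i).2.2)
              q.2.2 (q.2.1 i) = true) ∧
        (q.2.2 = true → ∀ j : Fin m, q.1 j = true)) := by
  constructor
  · rintro ⟨x, hx⟩
    refine ⟨x, (fun _ => true, fun _ => true, true), ⟨fun i => ?_, fun _ j => rfl⟩, ?_⟩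
    · rw [C'_iff]; simp
    · rintro ⟨y, v, z⟩ ⟨h1, h2⟩
      cases z with
      | true =>
        have hy : y = fun _ => true := funext fun j => h2 rfl j
        subst hy
        have hv : v = fun _ => true := funext fun i => by
          have := ((C'_iff _ _ _ _ _).mp (h1 i)).1
          simpa using this
        subst hv; rfl
      | false =>
        exfalso
        obtain ⟨i, hi⟩ := hx y
        have h4 := ((C'_iff _ _ _ _ _).mp (h1 i)).2
        simp only [clauseEval, Bool.or_eq_false_iff, List.get_eq_getElem] at hi
        simp [hi.1.1, hi.1.2, hi.2] at h4
  · rintro ⟨x, q, _, huniq⟩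
    refine ⟨x, fun y => ?_⟩
    by_contra h
    push_neg at h
    have hall : ∀ i : Fin φ.length, clauseEval (Sum.elim x y) (φ.get i) = true :=
      fun i => by
        cases hcl : clauseEval (Sum.elim x y) (φ.get i) with
        | false => exact absurd hcl (h i)
        | true => rfl
    have e0 : ((fun _ => true, fun _ => true, true) :
        (Fin m → Bool) × (Fin φ.length → Bool) × Bool) = q := by
      refine huniq _ ⟨fun i => ?_, fun _ j => rfl⟩
      rw [C'_iff]; simp
    have e1 : ((y, fun i => litEval (Sum.elim x y) (φ.get i).2.2, false) :
        (Fin m → Bool) × (Fin φ.length → Bool) × Bool) = q := by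
      refine huniq _ ⟨fun i => ?_, fun hz => by simp at hz⟩
      rw [C'_iff]
      refine ⟨by simp, ?_⟩
      have := hall i
      simp only [clauseEval] at this
      simpa [Bool.or_assoc] using this
    have : (true : Bool) = false := by
      have := e0.trans e1.symm
      exact congrArg (fun q => q.2.2) this
    simp at this
end

section
/- Let m : ℕ with m ≥ 2 and let a : Fin m → Bool. If a j = true for some j : Fin m, then there exists w : Fin (m − 1) → Bool such that (a, w) satisfies the chain condition and w (m − 2) = false. -/
/-- The chain condition encoding the clause chain
`(a₁ ∨ a₂ ∨ w₁) ∧ (¬w₁ ∨ a₃ ∨ w₂) ∧ ⋯ ∧ (¬w_{m−2} ∨ a_m ∨ w_{m−1})`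
used in the reduction of Theorem 2.4. -/
def ChainCond {m : ℕ} (hm : 2 ≤ m) (a : Fin m → Bool) (w : Fin (m - 1) → Bool) : Prop :=
  (a ⟨0, by omega⟩ || a ⟨1, by omega⟩ || w ⟨0, by omega⟩) = true ∧
  ∀ i : Fin (m - 1), 1 ≤ (i : ℕ) →
    (!(w ⟨(i : ℕ) - 1, by have := i.isLt; omega⟩) ||
      a ⟨(i : ℕ) + 1, by have := i.isLt; omega⟩ || w i) = true

/-- If some `a j` is true, then the `w i` can be chosen so that the chain
condition holds and `w (m − 2) = false`. -/
theorem stmt_5 (m : ℕ) (hm : 2 ≤ m) (a : Fin m → Bool)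
    (hj : ∃ j : Fin m, a j = true) :
    ∃ w : Fin (m - 1) → Bool, ChainCond hm a w ∧ w ⟨m - 2, by omega⟩ = false := by
  refine ⟨fun i => decide (∀ k : Fin m, (k : ℕ) ≤ (i : ℕ) + 1 → a k = false), ?_, ?_⟩
  · constructor
    · simp only [Bool.or_eq_true, decide_eq_true_eq]
      by_cases h0 : a ⟨0, by omega⟩ = true
      · exact Or.inl (Or.inl h0)
      by_cases h1 : a ⟨1, by omega⟩ = true
      · exact Or.inl (Or.inr h1)
      refine Or.inr fun k hk => ?_
      have : (k : ℕ) = 0 ∨ (k : ℕ) = 1 := by omega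
      rcases this with h | h
      · have : k = ⟨0, by omega⟩ := Fin.ext h
        rw [this]; simpa using h0
      · have : k = ⟨1, by omega⟩ := Fin.ext h
        rw [this]; simpa using h1
    · intro i hi
      simp only [Bool.or_eq_true, Bool.not_eq_true', decide_eq_true_eq,
        decide_eq_false_iff_not]
      by_cases hw : ∀ k : Fin m, (k : ℕ) ≤ (i : ℕ) - 1 + 1 → a k = false
      · by_cases ha : a ⟨(i : ℕ) + 1, by have := i.isLt; omega⟩ = true
        · exact Or.inl (Or.inr ha)
        · refine Or.inr fun k hk => ?_
          rcases Nat.lt_or_ge (k : ℕ) ((i : ℕ) + 1) with h | h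
          · exact hw k (by omega)
          · have : k = ⟨(i : ℕ) + 1, by have := i.isLt; omega⟩ := Fin.ext (show (k : ℕ) = (i : ℕ) + 1 by omega)
            rw [this]; simpa using ha
      · exact Or.inl (Or.inl (by simpa [decide_eq_false_iff_not] using hw))
  · simp only [decide_eq_false_iff_not]
    intro h
    obtain ⟨j, hja⟩ := hj
    have := h j (by have := j.isLt; omega)
    simp [this] at hja
end

section
/- Let n k : ℕ, let φ : (Fin n → Bool) → Bool be any Boolean predicate, and let t : Fin n → Bool satisfy φ t = true. Consider pairs (x, y) with x : Fin n → Bool and y : Fin n × Fin (k + 1) → Bool, indexed by the variable set Fin n ⊕ (Fin n × Fin (k + 1)), and define Φ' (x, y) = true iff φ x = true and for every i : Fin n and j : Fin (k + 1), x i = t i → y (i, j) = true. Then there exist s with Φ' s = true and a defining set of size at most k for ({p | Φ' p = true}, s) if and only if there is a defining set of size at most k for ({x | φ x = true}, t). -/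
/-- `D` is a defining set for `(F, s)`: `s ∈ F` and `s` is the unique element
of `F` agreeing with `s` at every element of `D`. -/
def IsDefiningSet {V R : Type*} (F : Set (V → R)) (s : V → R) (D : Finset V) : Prop :=
  s ∈ F ∧ ∀ f ∈ F, (∀ x ∈ D, f x = s x) → f = s

/-- The satisfaction relation of the formula `φ'` of Theorem 2.5: `φ` holds on
the `x`-part, and whenever `xᵢ` takes the value `t i`, all the `k + 1`
variables `y i j` are forced to be true. -/
def Phi' {n k : ℕ} (φ : (Fin n → Bool) → Bool) (t : Fin n → Bool)
    (s : (Fin n ⊕ Fin n × Fin (k + 1)) → Bool) : Prop :=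
  φ (fun i => s (Sum.inl i)) = true ∧
  ∀ (i : Fin n) (j : Fin (k + 1)), s (Sum.inl i) = t i → s (Sum.inr (i, j)) = true

/-- Correctness of the reduction in Theorem 2.5: `φ'` has some proper
assignment with a defining set of size at most `k` iff `(φ, t)` has a
defining set of size at most `k`. -/
theorem stmt_7 (n k : ℕ) (φ : (Fin n → Bool) → Bool) (t : Fin n → Bool)
    (ht : φ t = true) :
    (∃ s : (Fin n ⊕ Fin n × Fin (k + 1)) → Bool, Phi' φ t s ∧
        ∃ D : Finset (Fin n ⊕ Fin n × Fin (k + 1)), D.card ≤ k ∧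
          IsDefiningSet {p | Phi' φ t p} s D) ↔
    (∃ D : Finset (Fin n), D.card ≤ k ∧
        IsDefiningSet {x | φ x = true} t D) := by
  constructor
  · rintro ⟨s, hs, D, hD, hsF, huniq⟩
    -- the x-part of s must equal t
    have hx : ∀ i, s (Sum.inl i) = t i := by
      by_contra h
      push_neg at h
      obtain ⟨i, hi⟩ := h
      have hall : ∀ j : Fin (k + 1), Sum.inr (i, j) ∈ D := by
        intro j
        by_contra hj
        set f : (Fin n ⊕ Fin n × Fin (k + 1)) → Bool :=
          fun v => if v = Sum.inr (i, j) then ! s v else s v with hf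
        have hfinl : ∀ i', f (Sum.inl i') = s (Sum.inl i') := by
          intro i'; simp [hf]
        have hfF : f ∈ {p | Phi' φ t p} := by
          constructor
          · have : (fun i' => f (Sum.inl i')) = fun i' => s (Sum.inl i') := by
              funext i'; exact hfinl i'
            rw [this]; exact hs.1
          · intro i' j' h'
            rw [hfinl] at h'
            by_cases hv : (Sum.inr (i', j') : Fin n ⊕ Fin n × Fin (k + 1)) = Sum.inr (i, j)
            · exfalso
              have hii : i' = i := by
                have := (Sum.inr.injEq _ _).mp hv
                exact (Prod.mk.injEq _ _ _ _).mp this |>.1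
              exact hi (hii ▸ h')
            · simp only [hf, if_neg hv]
              exact hs.2 i' j' h'
        have hagree : ∀ v ∈ D, f v = s v := by
          intro v hv
          have : v ≠ Sum.inr (i, j) := fun hvv => hj (hvv ▸ hv)
          simp [hf, this]
        have := huniq f hfF hagree
        have hcontra : f (Sum.inr (i, j)) = s (Sum.inr (i, j)) := by rw [this]
        simp [hf] at hcontra
      -- k + 1 elements in D, contradiction
      have hsub : (Finset.univ.image fun j : Fin (k + 1) => (Sum.inr (i, j) :
          Fin n ⊕ Fin n × Fin (k + 1))) ⊆ D := by
        intro v hv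
        simp only [Finset.mem_image, Finset.mem_univ, true_and] at hv
        obtain ⟨j, rfl⟩ := hv
        exact hall j
      have hcard : (Finset.univ.image fun j : Fin (k + 1) => (Sum.inr (i, j) :
          Fin n ⊕ Fin n × Fin (k + 1))).card = k + 1 := by
        rw [Finset.card_image_of_injective]
        · simp
        · intro a b hab
          simpa using hab
      have := Finset.card_le_card hsub
      omega
    -- project D to the x-variables
    refine ⟨Finset.univ.filter fun i => Sum.inl i ∈ D, ?_, ht, ?_⟩
    · have hsub : ((Finset.univ.filter fun i => Sum.inl i ∈ D).image
          fun i : Fin n => (Sum.inl i : Fin n ⊕ Fin n × Fin (k + 1))) ⊆ D := by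
        intro v hv
        simp only [Finset.mem_image, Finset.mem_filter, Finset.mem_univ, true_and] at hv
        obtain ⟨j, hj, rfl⟩ := hv
        exact hj
      have hcard := Finset.card_image_of_injective
        (Finset.univ.filter fun i => Sum.inl i ∈ D)
        (fun a b hab => by simpa using hab :
          Function.Injective fun i : Fin n => (Sum.inl i : Fin n ⊕ Fin n × Fin (k + 1)))
      have := Finset.card_le_card hsub
      omega
    · intro g hg hgagree
      set f : (Fin n ⊕ Fin n × Fin (k + 1)) → Bool := Sum.elim g (fun _ => true) with hf
      have hfF : f ∈ {p | Phi' φ t p} := by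
        exact ⟨hg, fun i j _ => rfl⟩
      have hagree : ∀ v ∈ D, f v = s v := by
        intro v hv
        match v with
        | Sum.inl i =>
          have : i ∈ Finset.univ.filter fun i => Sum.inl i ∈ D := by
            simp [hv]
          have := hgagree i this
          simp only [hf, Sum.elim_inl, this, hx i]
        | Sum.inr (i, j) =>
          have := hs.2 i j (hx i)
          simp [hf, this]
      have hfeq := huniq f hfF hagree
      funext i
      have : f (Sum.inl i) = s (Sum.inl i) := by rw [hfeq]
      simpa [hf, hx i] using this
  · rintro ⟨D, hD, htF, huniq⟩
    refine ⟨Sum.elim t (fun _ => true), ⟨by simpa using ht, fun i j _ => rfl⟩,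
      D.image Sum.inl, le_trans Finset.card_image_le hD,
      ⟨by simpa using ht, fun i j _ => rfl⟩, ?_⟩
    intro f hfF hagree
    have hg : (fun i => f (Sum.inl i)) = t := by
      apply huniq
      · exact hfF.1
      · intro i hi
        have : Sum.inl i ∈ D.image Sum.inl := Finset.mem_image_of_mem (Sum.inl : Fin n → Fin n ⊕ Fin n × Fin (k + 1)) hi
        simpa using hagree _ this
    funext v
    match v with
    | Sum.inl i =>
      simpa using congrFun hg i
    | Sum.inr (i, j) =>
      have hti : f (Sum.inl i) = t i := congrFun hg i
      simpa using hfF.2 i j hti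
end

section
/- Let G be a simple graph on a finite vertex set V with chromatic number χ, let c : V → Fin χ be a proper coloring of G, and let D ⊆ V be such that c is the unique proper coloring V → Fin χ of G agreeing with c at every vertex of D. If a vertex v ∈ V satisfies degree(v) + 2 ≤ χ, then v ∈ D. -/
/-! A vertex `v` of degree at most `χ − 2` sees at most `χ − 1` colours on its closed
neighbourhood, so some colour `b ≠ c v` is missing there. Recolouring `v` alone with `b` gives a
second proper `χ`-colouring that agrees with `c` off `v`; hence any defining set of `c` must
contain `v`. -/

open Finset

namespace SimpleGraph

variable {V α : Type*} (G : SimpleGraph V)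

theorem exists_ne_forall_adj_ne_of_degree_add_one_lt [Fintype V] [DecidableRel G.Adj]
    [Fintype α] (c : V → α) (v : V) (hv : G.degree v + 1 < Fintype.card α) :
    ∃ b, b ≠ c v ∧ ∀ w, G.Adj v w → c w ≠ b := by
  classical
  have hcard : #(insert (c v) ((G.neighborFinset v).image c)) < #(Finset.univ : Finset α) :=
    calc #(insert (c v) ((G.neighborFinset v).image c))
        ≤ #((G.neighborFinset v).image c) + 1 := card_insert_le _ _
      _ ≤ G.degree v + 1 := by
          rw [← card_neighborFinset_eq_degree]
          exact Nat.add_le_add_right card_image_le 1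
      _ < #(Finset.univ : Finset α) := by rwa [Finset.card_univ]
  obtain ⟨b, -, hb⟩ := exists_mem_notMem_of_card_lt_card hcard
  refine ⟨b, fun h ↦ hb (h ▸ mem_insert_self _ _), fun w hw h ↦ hb ?_⟩
  exact mem_insert_of_mem (mem_image.2 ⟨w, (G.mem_neighborFinset v w).2 hw, h⟩)

theorem update_adj_ne [DecidableEq V] {c : V → α} (hc : ∀ u w, G.Adj u w → c u ≠ c w)
    {v : V} {b : α} (hb : ∀ w, G.Adj v w → c w ≠ b) :
    ∀ u w, G.Adj u w → Function.update c v b u ≠ Function.update c v b w := by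
  intro u w huw
  rcases eq_or_ne u v with rfl | hu <;> rcases eq_or_ne w u with rfl | hwu
  · exact absurd huw (G.loopless.irrefl _)
  · simpa [hwu] using (hb w huw).symm
  · exact absurd huw (G.loopless.irrefl _)
  · rcases eq_or_ne w v with rfl | hw
    · simpa [hu] using hb u huw.symm
    · simpa [hu, hw] using hc u w huw

end SimpleGraph

theorem stmt_8_general {V : Type*} [Fintype V] (G : SimpleGraph V) [DecidableRel G.Adj]
    (χ : ℕ) (c : V → Fin χ)
    (hc : ∀ u v : V, G.Adj u v → c u ≠ c v)
    (D : Set V)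
    (hD : ∀ c' : V → Fin χ, (∀ u v : V, G.Adj u v → c' u ≠ c' v) →
      (∀ x ∈ D, c' x = c x) → c' = c)
    (v : V) (hv : G.degree v + 2 ≤ χ) : v ∈ D := by
  classical
  by_contra hvD
  obtain ⟨b, hbv, hb⟩ := G.exists_ne_forall_adj_ne_of_degree_add_one_lt c v
    (by rw [Fintype.card_fin]; omega)
  have hupdate := hD (Function.update c v b) (G.update_adj_ne hc hb) fun x hx ↦
    Function.update_of_ne (fun h : x = v ↦ hvD (h ▸ hx)) _ _
  exact hbv (by simpa using congr_fun hupdate v)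

/-- A vertex of degree at most `χ(G) − 2` belongs to every defining set of a
`χ(G)`-coloring of `G` (used in the proofs of Theorems 3.2 and 3.3). -/
theorem stmt_8 {V : Type*} [Fintype V] (G : SimpleGraph V) [DecidableRel G.Adj]
    (χ : ℕ) (hχ : G.chromaticNumber = χ) (c : V → Fin χ)
    (hc : ∀ u v : V, G.Adj u v → c u ≠ c v)
    (D : Set V)
    (hD : ∀ c' : V → Fin χ, (∀ u v : V, G.Adj u v → c' u ≠ c' v) →
      (∀ x ∈ D, c' x = c x) → c' = c)
    (v : V) (hv : G.degree v + 2 ≤ χ) : v ∈ D :=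
  stmt_8_general G χ c hc D hD v hv
end

section
/- Let G be a simple graph on a finite vertex set V, let c : V → Fin 3 be a proper coloring of G, assume G has no proper coloring with values in Fin 2, and let k : ℕ. Let H be the graph on W = V ⊕ Fin 3 ⊕ ({p : V × Fin 3 // p.2 ≠ c p.1} × Fin (k + 1)) ⊕ Fin 4 with exactly the following adjacencies: Sum.inl u ∼ Sum.inl u' iff G.Adj u u'; the three vertices of the Fin 3 block are pairwise adjacent; each gadget vertex (⟨(u, d), h⟩, s) is adjacent exactly to Sum.inl u and to vertex d of the Fin 3 block; vertices 0 and 1 of the Fin 4 block are adjacent exactly to vertex 0 of the Fin 3 block, and vertices 2 and 3 of the Fin 4 block are adjacent exactly to vertex 1 of the Fin 3 block. Then there exist a proper coloring c'' : W → Fin 3 of H and a defining set of size at most k + 4 for c'' (among proper 3-colorings of H) if and only if there is a defining set of size at most k for c among proper 3-colorings of G. -/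
/-- `f` is a proper coloring of `G`. -/
def IsProperColoring {U R : Type*} (G : SimpleGraph U) (f : U → R) : Prop :=
  ∀ u v : U, G.Adj u v → f u ≠ f v

/-- The vertex set of the graph `H` of Theorem 3.3: the vertices of `G`, a
triangle `w₀w₁w₂`, for every vertex `u` of `G` and color `d ≠ c u` a block of
`k + 1` gadget vertices, and four pendant vertices. -/
abbrev HVert (V : Type*) (c : V → Fin 3) (k : ℕ) :=
  V ⊕ Fin 3 ⊕ ({p : V × Fin 3 // p.2 ≠ c p.1} × Fin (k + 1)) ⊕ Fin 4

/-- The base relation generating the adjacencies of `H`. -/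
def hRel {V : Type*} (G : SimpleGraph V) (c : V → Fin 3) (k : ℕ) :
    HVert V c k → HVert V c k → Prop
  | Sum.inl u, Sum.inl u' => G.Adj u u'
  | Sum.inr (Sum.inl _), Sum.inr (Sum.inl _) => True
  | Sum.inr (Sum.inr (Sum.inl (g, _))), Sum.inl u => u = g.1.1
  | Sum.inr (Sum.inr (Sum.inl (g, _))), Sum.inr (Sum.inl d) => d = g.1.2
  | Sum.inr (Sum.inr (Sum.inr a)), Sum.inr (Sum.inl j) =>
      ((a = 0 ∨ a = 1) ∧ j = 0) ∨ ((a = 2 ∨ a = 3) ∧ j = 1)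
  | _, _ => False

/-- The graph `H` of Theorem 3.3: `Sum.inl u ∼ Sum.inl u'` iff `G.Adj u u'`;
the `Fin 3` block is a triangle; each gadget vertex `(⟨(u, d), _⟩, s)` is
adjacent exactly to `Sum.inl u` and to vertex `d` of the triangle; pendant
vertices `0, 1` are adjacent exactly to `w₀` and `2, 3` to `w₁`. -/
def HGraph {V : Type*} (G : SimpleGraph V) (c : V → Fin 3) (k : ℕ) :
    SimpleGraph (HVert V c k) :=
  SimpleGraph.fromRel (hRel G c k)


section Helpers

private lemma fin3_exists_ne (a b : Fin 3) : ∃ x : Fin 3, x ≠ a ∧ x ≠ b := by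
  revert a b; decide

private def third3 (a b : Fin 3) : Fin 3 := -(a + b)

private lemma eq_third3 : ∀ x a b : Fin 3, a ≠ b → x ≠ a → x ≠ b → x = third3 a b := by
  decide

private lemma third3_ne_left : ∀ a b : Fin 3, a ≠ b → third3 a b ≠ a := by decide

private lemma third3_ne_right : ∀ a b : Fin 3, a ≠ b → third3 a b ≠ b := by decide

private lemma fin3_eq_of_ne : ∀ x a b e : Fin 3, a ≠ b → a ≠ e → b ≠ e → x ≠ a → x ≠ b → x = e := by
  decide

private lemma fin3_two_others : ∀ e : Fin 3, ∃ a b : Fin 3, a ≠ b ∧ a ≠ e ∧ b ≠ e := by decide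

variable {V : Type*} (G : SimpleGraph V) (c : V → Fin 3) (k : ℕ)

private lemma hgraph_proper_iff (f : HVert V c k → Fin 3) :
    IsProperColoring (HGraph G c k) f ↔
      ∀ x y, x ≠ y → hRel G c k x y → f x ≠ f y := by
  constructor
  · intro hf x y hne h
    exact hf x y (by rw [HGraph, SimpleGraph.fromRel_adj]; exact ⟨hne, Or.inl h⟩)
  · intro key x y hadj
    rw [HGraph, SimpleGraph.fromRel_adj] at hadj
    obtain ⟨hne, h | h⟩ := hadj
    · exact key x y hne h
    · exact (key y x hne.symm h).symm

private lemma adj_hgraph {x y : HVert V c k} (hne : x ≠ y) (h : hRel G c k x y) :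
    (HGraph G c k).Adj x y := by
  rw [HGraph, SimpleGraph.fromRel_adj]; exact ⟨hne, Or.inl h⟩

private lemma adj_tri {d d' : Fin 3} (h : d ≠ d') :
    (HGraph G c k).Adj (Sum.inr (Sum.inl d)) (Sum.inr (Sum.inl d')) :=
  adj_hgraph G c k (by simp [h]) (by simp [hRel])

private lemma adj_inl {u u' : V} (h : G.Adj u u') :
    (HGraph G c k).Adj (Sum.inl u) (Sum.inl u') :=
  adj_hgraph G c k (by simp [h.ne]) (by simp [hRel, h])

private lemma adj_gad_inl (p : {p : V × Fin 3 // p.2 ≠ c p.1}) (s : Fin (k + 1)) :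
    (HGraph G c k).Adj (Sum.inr (Sum.inr (Sum.inl (p, s)))) (Sum.inl p.1.1) :=
  adj_hgraph G c k (by simp) (by simp [hRel])

private lemma adj_gad_tri (p : {p : V × Fin 3 // p.2 ≠ c p.1}) (s : Fin (k + 1)) :
    (HGraph G c k).Adj (Sum.inr (Sum.inr (Sum.inl (p, s)))) (Sum.inr (Sum.inl p.1.2)) :=
  adj_hgraph G c k (by simp) (by simp [hRel])

private lemma adj_pend (a : Fin 4) (j : Fin 3)
    (h : ((a = 0 ∨ a = 1) ∧ j = 0) ∨ ((a = 2 ∨ a = 3) ∧ j = 1)) :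
    (HGraph G c k).Adj (Sum.inr (Sum.inr (Sum.inr a))) (Sum.inr (Sum.inl j)) :=
  adj_hgraph G c k (by simp) (by simp [hRel, h])

private lemma pend_nbr {a : Fin 4} {v : HVert V c k}
    (h : (HGraph G c k).Adj v (Sum.inr (Sum.inr (Sum.inr a)))) :
    ∃ j : Fin 3, v = Sum.inr (Sum.inl j) ∧
      (((a = 0 ∨ a = 1) ∧ j = 0) ∨ ((a = 2 ∨ a = 3) ∧ j = 1)) := by
  rw [HGraph, SimpleGraph.fromRel_adj] at h
  obtain ⟨hne, h | h⟩ := h <;>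
    rcases v with u | d | ⟨g, s⟩ | b <;> simp [hRel] at h ⊢
  exact h

private lemma gad_nbr {p : {p : V × Fin 3 // p.2 ≠ c p.1}} {s : Fin (k + 1)}
    {v : HVert V c k}
    (h : (HGraph G c k).Adj v (Sum.inr (Sum.inr (Sum.inl (p, s))))) :
    v = Sum.inl p.1.1 ∨ v = Sum.inr (Sum.inl p.1.2) := by
  rw [HGraph, SimpleGraph.fromRel_adj] at h
  obtain ⟨hne, h | h⟩ := h <;>
    rcases v with u | d | ⟨g', s'⟩ | b <;> simp [hRel] at h ⊢ <;> simp [h]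

private lemma recolor_contra {W : Type*} {H : SimpleGraph W} {c'' : W → Fin 3}
    {D'' : Finset W}
    (hdef : IsDefiningSet {f | IsProperColoring H f} c'' D'') {v : W} (hv : v ∉ D'')
    {x : Fin 3} (hx : x ≠ c'' v) (hnbr : ∀ u, H.Adj u v → x ≠ c'' u) : False := by
  classical
  have hf : IsProperColoring H (Function.update c'' v x) := by
    intro u u' hadj
    rcases eq_or_ne u v with rfl | hu
    · have hu' : u' ≠ u := (H.ne_of_adj hadj).symm
      rw [Function.update_self, Function.update_of_ne hu']
      exact hnbr u' hadj.symm
    · rw [Function.update_of_ne hu]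
      rcases eq_or_ne u' v with rfl | hu'
      · rw [Function.update_self]
        exact fun hcon => hnbr u hadj hcon.symm
      · rw [Function.update_of_ne hu']
        exact hdef.1 u u' hadj
  have heq := hdef.2 _ hf (fun y hy =>
    Function.update_of_ne (by rintro rfl; exact hv hy) _ _)
  have := congrFun heq v
  rw [Function.update_self] at this
  exact hx this

end Helpers

private def liftCol {V : Type*} {c : V → Fin 3} {k : ℕ} (σ : Fin 3 → Fin 3)
    (g : V → Fin 3) (c'' : HVert V c k → Fin 3) : HVert V c k → Fin 3
  | Sum.inl u => σ (g u)
  | Sum.inr (Sum.inl d) => σ d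
  | Sum.inr (Sum.inr (Sum.inl gs)) =>
      if c'' (Sum.inr (Sum.inr (Sum.inl gs))) = σ (g gs.1.1.1) then σ (c gs.1.1.1)
      else c'' (Sum.inr (Sum.inr (Sum.inl gs)))
  | Sum.inr (Sum.inr (Sum.inr a)) => c'' (Sum.inr (Sum.inr (Sum.inr a)))

private def colH {V : Type*} (c : V → Fin 3) (k : ℕ) : HVert V c k → Fin 3
  | Sum.inl u => c u
  | Sum.inr (Sum.inl d) => d
  | Sum.inr (Sum.inr (Sum.inl gs)) => third3 (c gs.1.1.1) gs.1.1.2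
  | Sum.inr (Sum.inr (Sum.inr a)) => ![1, 2, 0, 2] a


/-- Correctness of the reduction in Theorem 3.3: `H` has a proper 3-coloring
with a defining set of size at most `k + 4` iff `(G, c)` has a defining set of
size at most `k`. -/
theorem stmt_9 {V : Type*} [Fintype V] (G : SimpleGraph V) (c : V → Fin 3)
    (hc : IsProperColoring G c)
    (h2 : ¬ ∃ c₂ : V → Fin 2, IsProperColoring G c₂) (k : ℕ) :
    (∃ c'' : HVert V c k → Fin 3, IsProperColoring (HGraph G c k) c'' ∧
        ∃ D : Finset (HVert V c k), D.card ≤ k + 4 ∧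
          IsDefiningSet {f | IsProperColoring (HGraph G c k) f} c'' D) ↔
    (∃ D : Finset V, D.card ≤ k ∧
        IsDefiningSet {f | IsProperColoring G f} c D) := by

  classical
  set P : Fin 4 → HVert V c k := fun a => Sum.inr (Sum.inr (Sum.inr a)) with hP
  set w : Fin 3 → HVert V c k := fun d => Sum.inr (Sum.inl d) with hw
  constructor
  · rintro ⟨c'', hp'', D'', hcard, hdef⟩
    -- Step A: all four pendant vertices lie in D''
    have hPmem : ∀ a : Fin 4, P a ∈ D'' := by
      intro a
      by_contra hnot
      obtain ⟨j, hj⟩ : ∃ j : Fin 3, ∀ v, (HGraph G c k).Adj v (P a) → v = w j := by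
        refine ⟨if a = 0 ∨ a = 1 then 0 else 1, ?_⟩
        intro v hv
        obtain ⟨j', rfl, hcond⟩ := pend_nbr G c k hv
        rcases hcond with ⟨ha, rfl⟩ | ⟨ha, rfl⟩
        · simp [hw, ha]
        · have hno : ¬ (a = 0 ∨ a = 1) := by rcases ha with rfl | rfl <;> decide
          simp [hw, hno]
      obtain ⟨x, hx1, hx2⟩ := fin3_exists_ne (c'' (w j)) (c'' (P a))
      exact recolor_contra hdef hnot hx2 (fun v hv => by rw [hj v hv]; exact hx1)
    set PS : Finset (HVert V c k) := {P 0, P 1, P 2, P 3} with hPS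
    have hPSsub : PS ⊆ D'' := by
      intro x hx
      simp only [hPS, Finset.mem_insert, Finset.mem_singleton] at hx
      rcases hx with rfl | rfl | rfl | rfl <;> exact hPmem _
    have hPScard : PS.card = 4 := by
      rw [hPS, Finset.card_insert_of_notMem (by simp [hP]),
        Finset.card_insert_of_notMem (by simp [hP]),
        Finset.card_insert_of_notMem (by simp [hP]), Finset.card_singleton]
    have hDr : (D'' \ PS).card ≤ k := by
      have h1 := Finset.card_sdiff_of_subset hPSsub
      have h2 := Finset.card_le_card hPSsub
      omega
    -- Step B: each gadget block has a vertex outside D''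
    have hgfree : ∀ p : {p : V × Fin 3 // p.2 ≠ c p.1}, ∃ s : Fin (k + 1),
        (Sum.inr (Sum.inr (Sum.inl (p, s))) : HVert V c k) ∉ D'' := by
      intro p
      by_contra hall
      push_neg at hall
      have hinj : Function.Injective
          (fun s : Fin (k + 1) => (Sum.inr (Sum.inr (Sum.inl (p, s))) : HVert V c k)) := by
        intro s s' h; simpa using h
      have hsub : Finset.univ.image
          (fun s : Fin (k + 1) => (Sum.inr (Sum.inr (Sum.inl (p, s))) : HVert V c k))
          ⊆ D'' \ PS := by
        intro x hx
        simp only [Finset.mem_image, Finset.mem_univ, true_and] at hx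
        obtain ⟨s, rfl⟩ := hx
        exact Finset.mem_sdiff.2 ⟨hall s, by simp [hPS, hP]⟩
      have hle := Finset.card_le_card hsub
      rw [Finset.card_image_of_injective _ hinj, Finset.card_univ, Fintype.card_fin] at hle
      omega
    -- Step C: the triangle colors form a bijection σ
    set σ : Fin 3 → Fin 3 := fun d => c'' (w d) with hσ
    have hσinj : Function.Injective σ := by
      intro d d' h
      by_contra hne
      exact hp'' _ _ (adj_tri G c k hne) h
    -- Step D: c'' ∘ inl = σ ∘ c
    have hkey : ∀ (u : V) (d : Fin 3), d ≠ c u → c'' (Sum.inl u) ≠ σ d := by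
      intro u d hd hEq
      obtain ⟨s, hs⟩ := hgfree ⟨(u, d), hd⟩
      obtain ⟨x, hx1, hx2⟩ := fin3_exists_ne (σ d)
        (c'' (Sum.inr (Sum.inr (Sum.inl (⟨(u, d), hd⟩, s)))))
      refine recolor_contra hdef hs hx2 ?_
      intro v hv
      rcases gad_nbr G c k hv with rfl | rfl
      · rw [hEq]; exact hx1
      · exact hx1
    have hσc : ∀ u : V, c'' (Sum.inl u) = σ (c u) := by
      intro u
      obtain ⟨d₁, d₂, h12, h1e, h2e⟩ := fin3_two_others (c u)
      exact fin3_eq_of_ne _ (σ d₁) (σ d₂) (σ (c u))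
        (fun h => h12 (hσinj h)) (fun h => h1e (hσinj h)) (fun h => h2e (hσinj h))
        (hkey u d₁ h1e) (hkey u d₂ h2e)
    -- Step E: project D'' to a defining set for G
    set own : HVert V c k → Option V := fun v => match v with
      | Sum.inl u => some u
      | Sum.inr (Sum.inl _) => none
      | Sum.inr (Sum.inr (Sum.inl gs)) => some gs.1.1.1
      | Sum.inr (Sum.inr (Sum.inr _)) => none with hown
    refine ⟨(D'' \ PS).biUnion (fun v => (own v).toFinset), ?_, hc, ?_⟩
    · calc ((D'' \ PS).biUnion fun v => (own v).toFinset).card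
          ≤ ∑ v ∈ D'' \ PS, ((own v).toFinset).card := Finset.card_biUnion_le
        _ ≤ ∑ _v ∈ D'' \ PS, 1 := Finset.sum_le_sum (fun v _ => by
              rcases hov : own v with _ | u <;> simp [hov])
        _ = (D'' \ PS).card := by simp
        _ ≤ k := hDr
    · intro g hg hagree
      rw [Set.mem_setOf_eq] at hg
      have hgc : ∀ v ∈ D'' \ PS, ∀ u : V, own v = some u → g u = c u := by
        intro v hv u hu
        exact hagree u (Finset.mem_biUnion.2 ⟨v, hv, by simp [hu]⟩)
      have hfmem : IsProperColoring (HGraph G c k) (liftCol σ g c'') := by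
        rw [hgraph_proper_iff]
        rintro (u | d | ⟨gs, s⟩ | a) (u' | d' | ⟨gs', s'⟩ | a') hne h <;>
          simp only [hRel] at h <;> simp only [liftCol]
        · exact fun hcon => hg u u' h (hσinj hcon)
        · exact fun hcon => (fun hdd => hne (by simp [hdd])) (hσinj hcon)
        · -- gadget - inl
          subst h
          split_ifs with hcond
          · intro hcon
            have h1 : c gs.1.1 = g gs.1.1 := hσinj hcon
            have h2 := hp'' _ _ (adj_gad_inl G c k gs s)
            rw [hσc] at h2
            exact h2 (hcond.trans (by rw [h1]))
          · exact hcond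
        · -- gadget - triangle
          subst h
          split_ifs with hcond
          · exact fun hcon => gs.2 (hσinj hcon).symm
          · exact hp'' _ _ (adj_gad_tri G c k gs s)
        · -- pendant - triangle
          exact hp'' _ _ (adj_pend G c k a d' h)
      have hagree'' : ∀ x ∈ D'', liftCol σ g c'' x = c'' x := by
        intro x hx
        rcases x with u | d | ⟨gs, s⟩ | a
        · have hx' : Sum.inl u ∈ D'' \ PS := Finset.mem_sdiff.2 ⟨hx, by simp [hPS, hP]⟩
          have hgu := hgc _ hx' u rfl
          simp only [liftCol]
          rw [hgu, ← hσc]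
        · rfl
        · have hx' : (Sum.inr (Sum.inr (Sum.inl (gs, s))) : HVert V c k) ∈ D'' \ PS :=
            Finset.mem_sdiff.2 ⟨hx, by simp [hPS, hP]⟩
          have hgu := hgc _ hx' gs.1.1 rfl
          simp only [liftCol]
          rw [if_neg]
          rw [hgu, ← hσc]
          exact hp'' _ _ (adj_gad_inl G c k gs s)
        · rfl
      have heq := hdef.2 (liftCol σ g c'') hfmem hagree''
      funext u
      have h1 := congrFun heq (Sum.inl u)
      simp only [liftCol] at h1
      rw [hσc] at h1
      exact hσinj h1
  · -- backward direction
    rintro ⟨D, hDcard, -, hDuniq⟩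
    refine ⟨colH c k, ?_, ?_⟩
    · rw [hgraph_proper_iff]
      rintro (u | d | ⟨gs, s⟩ | a) (u' | d' | ⟨gs', s'⟩ | a') hne h <;>
        simp [hRel] at h <;> simp [colH]
      · exact hc _ _ h
      · exact fun hdd => hne (by simp [hdd])
      · subst h; exact third3_ne_left _ _ (Ne.symm gs.2)
      · subst h; exact third3_ne_right _ _ (Ne.symm gs.2)
      · rcases h with ⟨ha, rfl⟩ | ⟨ha, rfl⟩ <;> rcases ha with rfl | rfl <;> decide
    · refine ⟨(D.image Sum.inl ∪ {P 0, P 1, P 2, P 3} : Finset (HVert V c k)), ?_, ?_, ?_⟩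
      · have h1 := Finset.card_union_le (D.image Sum.inl) {P 0, P 1, P 2, P 3}
        have h2 := Finset.card_image_le (s := D) (f := (Sum.inl : V → HVert V c k))
        have h3 : ({P 0, P 1, P 2, P 3} : Finset (HVert V c k)).card ≤ 4 := by
          have a1 := Finset.card_insert_le (P 0) ({P 1, P 2, P 3} : Finset (HVert V c k))
          have a2 := Finset.card_insert_le (P 1) ({P 2, P 3} : Finset (HVert V c k))
          have a3 := Finset.card_insert_le (P 2) ({P 3} : Finset (HVert V c k))
          have a4 : ({P 3} : Finset (HVert V c k)).card = 1 := Finset.card_singleton _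
          omega
        omega
      · rw [Set.mem_setOf_eq, hgraph_proper_iff]
        rintro (u | d | ⟨gs, s⟩ | a) (u' | d' | ⟨gs', s'⟩ | a') hne h <;>
          simp [hRel] at h <;> simp [colH]
        · exact hc _ _ h
        · exact fun hdd => hne (by simp [hdd])
        · subst h; exact third3_ne_left _ _ (Ne.symm gs.2)
        · subst h; exact third3_ne_right _ _ (Ne.symm gs.2)
        · rcases h with ⟨ha, rfl⟩ | ⟨ha, rfl⟩ <;> rcases ha with rfl | rfl <;> decide
      · intro f hf hagree
        rw [Set.mem_setOf_eq] at hf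
        have hPf : ∀ a : Fin 4, f (P a) = colH c k (P a) := by
          intro a
          refine hagree (P a) (Finset.mem_union_right _ ?_)
          fin_cases a
          · exact Finset.mem_insert_self _ _
          · exact Finset.mem_insert_of_mem (Finset.mem_insert_self _ _)
          · exact Finset.mem_insert_of_mem (Finset.mem_insert_of_mem (Finset.mem_insert_self _ _))
          · exact Finset.mem_insert_of_mem (Finset.mem_insert_of_mem
              (Finset.mem_insert_of_mem (Finset.mem_singleton_self _)))
        have hP0 : f (P 0) = 1 := by rw [hPf]; rfl
        have hP1 : f (P 1) = 2 := by rw [hPf]; rfl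
        have hP2 : f (P 2) = 0 := by rw [hPf]; rfl
        have hP3 : f (P 3) = 2 := by rw [hPf]; rfl
        have hw0 : f (w 0) = 0 := by
          have h01 := hf _ _ (adj_pend G c k 0 0 (by simp))
          have h11 := hf _ _ (adj_pend G c k 1 0 (by simp))
          rw [hP0] at h01; rw [hP1] at h11
          exact fin3_eq_of_ne _ 1 2 0 (by decide) (by decide) (by decide)
            (fun hcon => h01 hcon.symm) (fun hcon => h11 hcon.symm)
        have hw1 : f (w 1) = 1 := by
          have h01 := hf _ _ (adj_pend G c k 2 1 (by simp))
          have h11 := hf _ _ (adj_pend G c k 3 1 (by simp))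
          rw [hP2] at h01; rw [hP3] at h11
          exact fin3_eq_of_ne _ 0 2 1 (by decide) (by decide) (by decide)
            (fun hcon => h01 hcon.symm) (fun hcon => h11 hcon.symm)
        have hw2 : f (w 2) = 2 := by
          have h01 := hf _ _ (adj_tri G c k (show (2 : Fin 3) ≠ 0 by decide))
          have h11 := hf _ _ (adj_tri G c k (show (2 : Fin 3) ≠ 1 by decide))
          rw [hw0] at h01; rw [hw1] at h11
          exact fin3_eq_of_ne _ 0 1 2 (by decide) (by decide) (by decide) h01 h11
        have hwd : ∀ d : Fin 3, f (w d) = d := by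
          intro d; fin_cases d <;> assumption
        have hinl : ∀ u : V, f (Sum.inl u) = c u := by
          have hfG : IsProperColoring G (f ∘ Sum.inl) := fun u u' h =>
            hf _ _ (adj_inl G c k h)
          have := hDuniq (f ∘ Sum.inl) hfG (fun x hx =>
            hagree (Sum.inl x) (Finset.mem_union_left _ (Finset.mem_image_of_mem _ hx)))
          exact fun u => congrFun this u
        funext v
        rcases v with u | d | ⟨gs, s⟩ | a
        · exact hinl u
        · exact hwd d
        · have h1 := hf _ _ (adj_gad_inl G c k gs s)
          have h2 := hf _ _ (adj_gad_tri G c k gs s)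
          rw [hinl] at h1; rw [hwd] at h2
          exact eq_third3 _ _ _ (Ne.symm gs.2) h1 h2
        · exact hPf a
end

section
/- Let G be a simple graph on a finite vertex set V, let c : V → Fin 3 be a proper coloring of G, assume G has no proper coloring with values in Fin 2, and let k : ℕ. Let H be the graph on W = V ⊕ Fin 3 ⊕ ({p : V × Fin 3 // p.2 ≠ c p.1} × Fin (k + 1)) ⊕ Fin 4 with exactly the following adjacencies: Sum.inl u ∼ Sum.inl u' iff G.Adj u u'; the three vertices of the Fin 3 block are pairwise adjacent; each gadget vertex (⟨(u, d), h⟩, s) is adjacent exactly to Sum.inl u and to vertex d of the Fin 3 block; vertices 0 and 1 of the Fin 4 block are adjacent exactly to vertex 0 of the Fin 3 block, and vertices 2 and 3 of the Fin 4 block are adjacent exactly to vertex 1 of the Fin 3 block. Then the chromatic number of H is 3. -/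
lemma third_ne {x y : Fin 3} (h : x ≠ y) : -(x + y) ≠ x ∧ -(x + y) ≠ y := by
  revert h; revert x y; decide

/-- The explicit 3-coloring of `H`. -/
def hColor {V : Type*} (c : V → Fin 3) (k : ℕ) : HVert V c k → Fin 3 :=
  Sum.elim c (Sum.elim id (Sum.elim (fun g => -(c g.1.1.1 + g.1.1.2)) (fun _ => 2)))

lemma hColor_proper {V : Type*} (G : SimpleGraph V) (c : V → Fin 3)
    (hc : IsProperColoring G c) (k : ℕ) :
    ∀ a b : HVert V c k, (HGraph G c k).Adj a b → hColor c k a ≠ hColor c k b := by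
  have key : ∀ a b : HVert V c k, a ≠ b → hRel G c k a b →
      hColor c k a ≠ hColor c k b := by
    rintro a b hne hr
    match a, b with
    | Sum.inl u, Sum.inl u' => exact hc u u' hr
    | Sum.inr (Sum.inl i), Sum.inr (Sum.inl j) =>
        simpa [hColor] using fun h => hne (by simp [h])
    | Sum.inr (Sum.inr (Sum.inl (g, s))), Sum.inl u =>
        subst hr
        simpa [hColor] using (third_ne (Ne.symm g.2)).1
    | Sum.inr (Sum.inr (Sum.inl (g, s))), Sum.inr (Sum.inl d) =>
        subst hr
        simpa [hColor] using (third_ne (Ne.symm g.2)).2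
    | Sum.inr (Sum.inr (Sum.inr a)), Sum.inr (Sum.inl j) =>
        rcases hr with ⟨_, hj⟩ | ⟨_, hj⟩ <;> subst hj <;> simp [hColor]
  intro a b hadj
  rcases hadj with ⟨hne, hr | hr⟩
  · exact key a b hne hr
  · exact (key b a hne.symm hr).symm

/-- The graph `H` constructed from a 3-chromatic graph `G` in the proof of
Theorem 3.3 is again 3-chromatic. -/
theorem stmt_10 {V : Type*} [Fintype V] (G : SimpleGraph V) (c : V → Fin 3)
    (hc : IsProperColoring G c)
    (h2 : ¬ ∃ c₂ : V → Fin 2, IsProperColoring G c₂) (k : ℕ) :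
    (HGraph G c k).chromaticNumber = 3 := by
  have hcol : (HGraph G c k).Colorable 3 :=
    ⟨SimpleGraph.Coloring.mk (hColor c k) (fun {a b} h => hColor_proper G c hc k a b h)⟩
  have hupper : (HGraph G c k).chromaticNumber ≤ 3 := by
    simpa using hcol.chromaticNumber_le
  have hlower : ¬ (HGraph G c k).Colorable 2 := by
    rintro ⟨C⟩
    -- triangle vertices
    have adj : ∀ i j : Fin 3, i ≠ j →
        (HGraph G c k).Adj (Sum.inr (Sum.inl i)) (Sum.inr (Sum.inl j)) := by
      intro i j hij
      exact ⟨by simp [hij], Or.inl trivial⟩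
    have h01 := C.valid (adj 0 1 (by decide))
    have h02 := C.valid (adj 0 2 (by decide))
    have h12 := C.valid (adj 1 2 (by decide))
    set x := C (Sum.inr (Sum.inl (0 : Fin 3)))
    set y := C (Sum.inr (Sum.inl (1 : Fin 3)))
    set z := C (Sum.inr (Sum.inl (2 : Fin 3)))
    have e1 : x.val ≠ y.val := fun h => h01 (Fin.ext h)
    have e2 : x.val ≠ z.val := fun h => h02 (Fin.ext h)
    have e3 : y.val ≠ z.val := fun h => h12 (Fin.ext h)
    have := x.isLt; have := y.isLt; have := z.isLt
    omega
  have h3 : (3 : ℕ∞) ≤ (HGraph G c k).chromaticNumber := by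
    by_contra h
    push_neg at h
    have : (HGraph G c k).chromaticNumber ≤ 2 := by
      exact Order.le_of_lt_add_one (by norm_num at h ⊢; exact h)
    rw [show ((2 : ℕ∞)) = ((2 : ℕ) : ℕ∞) by norm_num,
      SimpleGraph.chromaticNumber_le_iff_colorable] at this
    exact hlower this
  exact le_antisymm hupper h3
end
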